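/- Let N = [[N₁₁, N₁₂],[N₂₁, N₂₂]] be a real symmetric positive semi-definite 2n×2n matrix split into n×n blocks. Then for any w > 0, ±(N₁₂ + N₂₁) ⪯ w N₁₁ + (1/w) N₂₂ (that is, both N₁₂+N₂₁ and −(N₁₂+N₂₁) are dominated in the Loewner order). Furthermore, if in addition N₁₁ ≻ 0, then ±(N₁₂ + N₂₁) ⪯ 2 √(𝐫(N₁₁^{-1} N₂₂)) · N₁₁, where 𝐫(·) is the spectral radius. -/

import Mathlib

open Matrix

/-- Spectral radius of a real square matrix: the largest modulus of a complex eigenvalue. -/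
noncomputable def specRad {m : Type*} [Fintype m] [DecidableEq m] (M : Matrix m m ℝ) : ℝ :=
  sSup ((fun z : ℂ => ‖z‖) '' spectrum ℂ (M.map (Complex.ofReal · : ℝ → ℂ)))

/-!
Testing the positive semidefinite block matrix against the vectors `(w x, x)` gives
`w² N₁₁ + w (N₁₂ + N₂₁) + N₂₂ ⪰ 0`, and dividing by `w` gives the first bound; conjugating by
`diag(1, -1)` flips the sign of the cross term. For the second bound, with `S = N₁₁^{1/2}` the
symmetric matrix `S⁻¹ N₂₂ S⁻¹` is similar to `N₁₁⁻¹ N₂₂`, so its eigenvalues are at most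
`r = 𝐫(N₁₁⁻¹ N₂₂)` and `N₂₂ ⪯ r N₁₁`. Hence `±(N₁₂ + N₂₁) ⪯ (w + r / w) N₁₁` for every `w > 0`,
and `w = √r` gives the claim (when `r = 0`, let `w → 0`).
-/

open scoped MatrixOrder
open Filter Topology

variable {m : Type*} [Fintype m]

section SpectralRadius

variable [DecidableEq m]

lemma specRad_nonneg (M : Matrix m m ℝ) : 0 ≤ specRad M :=
  Real.sSup_nonneg fun _ ⟨_, _, hz⟩ => hz ▸ norm_nonneg _

lemma le_specRad_of_mem_spectrum {M : Matrix m m ℝ} {μ : ℝ} (hμ : μ ∈ spectrum ℝ M) :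
    μ ≤ specRad M := by
  have hℂ : (μ : ℂ) ∈ spectrum ℂ (M.map (Complex.ofReal · : ℝ → ℂ)) := by
    rw [mem_spectrum_iff_isRoot_charpoly] at hμ ⊢
    exact (charpoly_map M Complex.ofRealHom).symm ▸ hμ.map
  calc μ ≤ ‖(μ : ℂ)‖ := by simpa using le_abs_self μ
    _ ≤ specRad M := le_csSup ((finite_spectrum _).image _).bddAbove ⟨_, hℂ, rfl⟩

lemma le_specRad_inv_mul_smul {A D : Matrix m m ℝ} (hA : A.PosDef) (hD : D.IsHermitian) :
    D ≤ specRad (A⁻¹ * D) • A := by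
  set S := CFC.sqrt A
  have hS : IsSelfAdjoint S := IsSelfAdjoint.of_nonneg (CFC.sqrt_nonneg A)
  have hSS : S * S = A := CFC.sqrt_mul_sqrt_self A hA.posSemidef.nonneg
  have hSu : IsUnit S := (CFC.isUnit_sqrt_iff A).mpr hA.isUnit
  have hSdet : IsUnit S.det := (isUnit_iff_isUnit_det S).mp hSu
  set X := S⁻¹ * D * S⁻¹
  have hX_conj : X = hSu.unit * (A⁻¹ * D) * (hSu.unit⁻¹ : (Matrix m m ℝ)ˣ) := by
    rw [coe_units_inv, IsUnit.unit_spec, ← hSS, Matrix.mul_inv_rev, ← mul_assoc, ← mul_assoc,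
      mul_nonsing_inv _ hSdet, one_mul]
  have hX : IsSelfAdjoint X := by
    have h := hD.isSelfAdjoint.conjugate S⁻¹
    rwa [star_eq_conjTranspose, (IsHermitian.inv hS : (S⁻¹)ᴴ = S⁻¹)] at h
  have hX_le : X ≤ algebraMap ℝ _ (specRad (A⁻¹ * D)) :=
    le_algebraMap_of_spectrum_le (fun μ hμ => le_specRad_of_mem_spectrum
      (by rwa [hX_conj, spectrum.units_conjugate] at hμ)) hX
  calc D = S * X * S := by
        simp only [X, ← mul_assoc, mul_nonsing_inv _ hSdet, one_mul]
        rw [mul_assoc, nonsing_inv_mul _ hSdet, mul_one]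
    _ ≤ S * algebraMap ℝ _ (specRad (A⁻¹ * D)) * S := hS.conjugate_le_conjugate hX_le
    _ = specRad (A⁻¹ * D) • A := by
        rw [Algebra.algebraMap_eq_smul_one, mul_smul_comm, mul_one, smul_mul_assoc, hSS]

end SpectralRadius

namespace Matrix.PosSemidef

lemma fromBlocks_neg_offDiag [DecidableEq m] {n : Type*} [Fintype n] [DecidableEq n]
    {A : Matrix m m ℝ} {B : Matrix m n ℝ} {C : Matrix n m ℝ} {D : Matrix n n ℝ}
    (hM : (fromBlocks A B C D).PosSemidef) : (fromBlocks A (-B) (-C) D).PosSemidef := by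
  have e : (fromBlocks 1 0 0 (-1) : Matrix (m ⊕ n) (m ⊕ n) ℝ)ᴴ * fromBlocks A B C D *
      fromBlocks 1 0 0 (-1) = fromBlocks A (-B) (-C) D := by
    simp [fromBlocks_transpose, fromBlocks_multiply]
  exact e ▸ hM.conjTranspose_mul_mul_same _

lemma sq_smul_add_mul_smul_add_sq_smul_of_fromBlocks [DecidableEq m] {A B C D : Matrix m m ℝ}
    (hM : (fromBlocks A B C D).PosSemidef) (a b : ℝ) :
    (a ^ 2 • A + (a * b) • (B + C) + b ^ 2 • D).PosSemidef := by
  convert hM.conjTranspose_mul_mul_same (fromRows (a • 1 : Matrix m m ℝ) (b • 1)) using 1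
  rw [conjTranspose_fromRows_eq_fromCols_conjTranspose, fromCols_mul_fromBlocks,
    fromCols_mul_fromRows]
  simp only [conjTranspose_smul, conjTranspose_one, star_trivial, Matrix.smul_mul,
    Matrix.mul_smul, Matrix.one_mul, Matrix.mul_one]
  module

lemma smul_add_inv_smul_add_of_fromBlocks [DecidableEq m] {A B C D : Matrix m m ℝ}
    (hM : (fromBlocks A B C D).PosSemidef) {w : ℝ} (hw : 0 < w) :
    (w • A + (1 / w) • D + (B + C)).PosSemidef := by
  convert (hM.sq_smul_add_mul_smul_add_sq_smul_of_fromBlocks w 1).smul (one_div_pos.mpr hw).le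
    using 1
  match_scalars <;> field_simp

lemma of_forall_pos_smul_add {A S : Matrix m m ℝ} (hA : A.IsHermitian)
    (h : ∀ ε : ℝ, 0 < ε → (ε • A + S).PosSemidef) : S.PosSemidef := by
  refine .of_dotProduct_mulVec_nonneg (by simpa using (h 1 one_pos).isHermitian.sub hA)
    fun x => ?_
  have hq : ∀ ε : ℝ,
      star x ⬝ᵥ (ε • A + S) *ᵥ x = ε * (star x ⬝ᵥ A *ᵥ x) + star x ⬝ᵥ S *ᵥ x := fun ε => by
    simp only [add_mulVec, smul_mulVec, dotProduct_add, dotProduct_smul, smul_eq_mul]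
  have hlim : Tendsto (fun ε : ℝ => ε * (star x ⬝ᵥ A *ᵥ x) + star x ⬝ᵥ S *ᵥ x) (𝓝[>] 0)
      (𝓝 (star x ⬝ᵥ S *ᵥ x)) := by
    apply tendsto_nhdsWithin_of_tendsto_nhds
    have hc : Continuous fun ε : ℝ => ε * (star x ⬝ᵥ A *ᵥ x) + star x ⬝ᵥ S *ᵥ x := by fun_prop
    simpa using hc.tendsto 0
  exact ge_of_tendsto hlim <| eventually_nhdsWithin_of_forall fun ε hε =>
    hq ε ▸ (h ε hε).dotProduct_mulVec_nonneg x

end Matrix.PosSemidef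

lemma Matrix.posSemidef_two_sqrt_smul_add {A D S : Matrix m m ℝ} {r : ℝ} (hA : A.IsHermitian)
    (hr : 0 ≤ r) (hD : D ≤ r • A)
    (h : ∀ w : ℝ, 0 < w → (w • A + (1 / w) • D + S).PosSemidef) :
    ((2 * √r) • A + S).PosSemidef := by
  have hAS : ∀ w : ℝ, 0 < w → ((w + r / w) • A + S).PosSemidef := fun w hw => by
    convert (h w hw).add ((le_iff.mp hD).smul (one_div_pos.mpr hw).le) using 1
    module
  rcases hr.eq_or_lt with rfl | hr
  · simpa using PosSemidef.of_forall_pos_smul_add hA fun w hw => by simpa using hAS w hw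
  · convert hAS √r (Real.sqrt_pos.mpr hr) using 3
    rw [Real.div_sqrt]
    ring

/-- If the real symmetric `2n×2n` block matrix `N = [[N₁₁,N₁₂],[N₂₁,N₂₂]]`
is positive semi-definite, then `±(N₁₂+N₂₁) ⪯ w N₁₁ + (1/w) N₂₂` for every `w > 0`;
and if moreover `N₁₁ ≻ 0`, then `±(N₁₂+N₂₁) ⪯ 2√(𝐫(N₁₁⁻¹N₂₂)) N₁₁`. -/
theorem block_psd_cross_term_bounds {n : ℕ}
    (N₁₁ N₁₂ N₂₁ N₂₂ : Matrix (Fin n) (Fin n) ℝ)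
    (hN : (Matrix.fromBlocks N₁₁ N₁₂ N₂₁ N₂₂).PosSemidef) :
    (∀ w : ℝ, 0 < w →
        (w • N₁₁ + (1 / w) • N₂₂ - (N₁₂ + N₂₁)).PosSemidef ∧
        (w • N₁₁ + (1 / w) • N₂₂ + (N₁₂ + N₂₁)).PosSemidef)
    ∧ (N₁₁.PosDef →
        ((2 * Real.sqrt (specRad (N₁₁⁻¹ * N₂₂))) • N₁₁ - (N₁₂ + N₂₁)).PosSemidef ∧
        ((2 * Real.sqrt (specRad (N₁₁⁻¹ * N₂₂))) • N₁₁ + (N₁₂ + N₂₁)).PosSemidef) := by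
  have h_add : ∀ w : ℝ, 0 < w → (w • N₁₁ + (1 / w) • N₂₂ + (N₁₂ + N₂₁)).PosSemidef :=
    fun w hw => hN.smul_add_inv_smul_add_of_fromBlocks hw
  have h_sub : ∀ w : ℝ, 0 < w → (w • N₁₁ + (1 / w) • N₂₂ + -(N₁₂ + N₂₁)).PosSemidef :=
    fun w hw => by
      simpa only [neg_add] using hN.fromBlocks_neg_offDiag.smul_add_inv_smul_add_of_fromBlocks hw
  simp only [sub_eq_add_neg]
  refine ⟨fun w hw => ⟨h_sub w hw, h_add w hw⟩, fun hA => ?_⟩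
  have hD : N₂₂ ≤ specRad (N₁₁⁻¹ * N₂₂) • N₁₁ :=
    le_specRad_inv_mul_smul hA (isHermitian_fromBlocks_iff.mp hN.isHermitian).2.2.2
  exact ⟨posSemidef_two_sqrt_smul_add hA.isHermitian (specRad_nonneg _) hD h_sub,
    posSemidef_two_sqrt_smul_add hA.isHermitian (specRad_nonneg _) hD h_add⟩
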